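/- arXiv:1405.5233 — 7 statements merged into one kernel-verified Lean document; each statement's English description precedes it below -/
import Mathlib

section
/- For every positive integer k and every sign b ∈ {−1, 1}, the number of sequences of length k over {−1, 0, 1} whose nonzero terms alternate in sign, whose first nonzero term equals b, and which have an odd number of nonzero terms is 2^(k−1). -/
lemma card_odd_subsets (n : ℕ) (hn : 0 < n) :
    (Finset.univ.filter fun S : Finset (Fin n) => Odd S.card).card = 2 ^ (n-1) := by
  set z : Fin n := ⟨0, hn⟩ with hz
  set tog : Finset (Fin n) → Finset (Fin n) :=
    fun S => if z ∈ S then S.erase z else insert z S with htog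
  have hcard : ∀ S : Finset (Fin n), Odd S.card → Even (tog S).card := by
    intro S hS
    by_cases h : z ∈ S
    · simp only [htog, if_pos h, Finset.card_erase_of_mem h]
      rcases hS with ⟨m, hm⟩
      have : 0 < S.card := Finset.card_pos.2 ⟨z, h⟩
      exact ⟨m, by omega⟩
    · simp only [htog, if_neg h, Finset.card_insert_of_notMem h]
      rcases hS with ⟨m, hm⟩; exact ⟨m+1, by omega⟩
  have hcard' : ∀ S : Finset (Fin n), Even S.card → Odd (tog S).card := by
    intro S hS
    by_cases h : z ∈ S
    · simp only [htog, if_pos h, Finset.card_erase_of_mem h]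
      rcases hS with ⟨m, hm⟩
      have : 0 < S.card := Finset.card_pos.2 ⟨z, h⟩
      exact ⟨m-1, by omega⟩
    · simp only [htog, if_neg h, Finset.card_insert_of_notMem h]
      rcases hS with ⟨m, hm⟩; exact ⟨m, by omega⟩
  have hinv : ∀ S : Finset (Fin n), tog (tog S) = S := by
    intro S
    by_cases h : z ∈ S
    · simp [htog, h, Finset.insert_erase h]
    · simp [htog, h]
  have hbij : (Finset.univ.filter fun S : Finset (Fin n) => Odd S.card).card
      = (Finset.univ.filter fun S : Finset (Fin n) => Even S.card).card := by
    apply Finset.card_bij' (fun S _ => tog S) (fun S _ => tog S)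
    · intro S hS
      simp only [Finset.mem_filter, Finset.mem_univ, true_and] at hS ⊢
      exact hcard S hS
    · intro S hS
      simp only [Finset.mem_filter, Finset.mem_univ, true_and] at hS ⊢
      exact hcard' S hS
    · intro S _; exact hinv S
    · intro S _; exact hinv S
  have hsum : (Finset.univ.filter fun S : Finset (Fin n) => Odd S.card).card
      + (Finset.univ.filter fun S : Finset (Fin n) => Even S.card).card = 2 ^ n := by
    have := Finset.card_filter_add_card_filter_not
      (s := (Finset.univ : Finset (Finset (Fin n)))) (p := fun S => Odd S.card)
    simp only [Nat.not_odd_iff_even] at this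
    rw [this, Finset.card_univ, Fintype.card_finset, Fintype.card_fin]
  have h2 : 2 ^ n = 2 * 2 ^ (n-1) := by
    rw [← pow_succ']; congr 1; omega
  omega

/-- For every positive integer `k` and sign `b ∈ {-1,1}`, the number of
sequences of length `k` over `{-1,0,1}` whose nonzero terms alternate in sign, whose
first nonzero term equals `b`, and which have an odd number of nonzero terms is `2^(k-1)`. -/
theorem stmt0 (k : ℕ) (hk : 0 < k) (b : ℤ) (hb : b = -1 ∨ b = 1) :
    Set.ncard {v : Fin k → ℤ |
      (∀ i, v i = -1 ∨ v i = 0 ∨ v i = 1) ∧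
      (∀ i j : Fin k, i < j → v i ≠ 0 → v j ≠ 0 →
        (∀ l, i < l → l < j → v l = 0) → v j = -v i) ∧
      (∀ i : Fin k, v i ≠ 0 → (∀ l, l < i → v l = 0) → v i = b) ∧
      Odd (Finset.univ.filter (fun i => v i ≠ 0)).card} = 2 ^ (k - 1) := by
  have hb0 : b ≠ 0 := by rcases hb with h | h <;> simp [h]
  set g : Finset (Fin k) → (Fin k → ℤ) :=
    fun S i => if i ∈ S then (if Even ((S.filter (· < i)).card) then b else -b) else 0 with hg
  have hne : ∀ (S : Finset (Fin k)) (i : Fin k), g S i ≠ 0 ↔ i ∈ S := by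
    intro S i
    constructor
    · intro h; by_contra hm; simp [hg, hm] at h
    · intro h; simp only [hg, if_pos h]
      split <;> simpa using hb0
  have himg : {v : Fin k → ℤ |
      (∀ i, v i = -1 ∨ v i = 0 ∨ v i = 1) ∧
      (∀ i j : Fin k, i < j → v i ≠ 0 → v j ≠ 0 →
        (∀ l, i < l → l < j → v l = 0) → v j = -v i) ∧
      (∀ i : Fin k, v i ≠ 0 → (∀ l, l < i → v l = 0) → v i = b) ∧
      Odd (Finset.univ.filter (fun i => v i ≠ 0)).card}
      = g '' {S : Finset (Fin k) | Odd S.card} := by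
    ext v
    simp only [Set.mem_setOf_eq, Set.mem_image]
    constructor
    · rintro ⟨h1, h2, h3, h4⟩
      set S : Finset (Fin k) := Finset.univ.filter (fun i => v i ≠ 0) with hS
      have hmemS : ∀ i : Fin k, i ∈ S ↔ v i ≠ 0 := by
        intro i; simp [hS]
      refine ⟨S, h4, ?_⟩
      have key : ∀ m : ℕ, ∀ i : Fin k, i.val < m → v i ≠ 0 →
          v i = (if Even ((S.filter (· < i)).card) then b else -b) := by
        intro m
        induction m with
        | zero => intro i hi; omega
        | succ m ih =>
          intro i hi hvi
          by_cases hT : (S.filter (· < i)).Nonempty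
          · set j : Fin k := (S.filter (· < i)).max' hT with hj
            have hjmem : j ∈ S.filter (· < i) := Finset.max'_mem _ hT
            have hjS : j ∈ S := (Finset.mem_filter.1 hjmem).1
            have hji : j < i := (Finset.mem_filter.1 hjmem).2
            have hvj : v j ≠ 0 := (hmemS j).1 hjS
            have hbet : ∀ l, j < l → l < i → v l = 0 := by
              intro l hjl hli
              by_contra hvl
              have hlmem : l ∈ S.filter (· < i) := by
                rw [Finset.mem_filter]
                exact ⟨(hmemS l).2 hvl, hli⟩
              have := Finset.le_max' _ l hlmem
              exact absurd (lt_of_le_of_lt this hjl) (lt_irrefl l)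
            have hvij : v i = -v j := h2 j i hji hvj hvi hbet
            have hjval : v j = (if Even ((S.filter (· < j)).card) then b else -b) := by
              apply ih j _ hvj
              have : j.val < i.val := hji
              omega
            have hfeq : S.filter (· < i) = insert j (S.filter (· < j)) := by
              ext x
              simp only [Finset.mem_insert, Finset.mem_filter]
              constructor
              · rintro ⟨hxS, hxi⟩
                have hxj : x ≤ j :=
                  Finset.le_max' (S.filter (· < i)) x (Finset.mem_filter.2 ⟨hxS, hxi⟩)
                rcases eq_or_lt_of_le hxj with h | h
                · exact Or.inl h
                · exact Or.inr ⟨hxS, h⟩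
              · rintro (rfl | ⟨hxS, hxj⟩)
                · exact ⟨hjS, hji⟩
                · exact ⟨hxS, lt_trans hxj hji⟩
            have hjnot : j ∉ S.filter (· < j) := by
              simp [Finset.mem_filter]
            have hcards : (S.filter (· < i)).card = (S.filter (· < j)).card + 1 := by
              rw [hfeq, Finset.card_insert_of_notMem hjnot]
            rw [hvij, hjval, hcards]
            by_cases hE : Even ((S.filter (· < j)).card)
            · rw [if_pos hE, if_neg (by simp [Nat.even_add_one, hE])]
            · rw [if_neg hE, if_pos (by simp [Nat.even_add_one, hE])]
              ring
          · have hT0 : (S.filter (· < i)).card = 0 := by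
              rw [Finset.card_eq_zero]
              exact Finset.not_nonempty_iff_eq_empty.1 hT
            have hfirst : ∀ l, l < i → v l = 0 := by
              intro l hl
              by_contra hvl
              exact hT ⟨l, Finset.mem_filter.2 ⟨(hmemS l).2 hvl, by simpa using hl⟩⟩
            rw [hT0, if_pos (Even.zero)]
            exact h3 i hvi hfirst
      funext i
      by_cases hvi : v i = 0
      · have : i ∉ S := by simp [hmemS, hvi]
        simp [hg, this, hvi]
      · have hiS : i ∈ S := (hmemS i).2 hvi
        simp only [hg, if_pos hiS]
        exact (key (i.val + 1) i (by omega) hvi).symm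
    · rintro ⟨S, hSodd, rfl⟩
      refine ⟨?_, ?_, ?_, ?_⟩
      · intro i
        by_cases h : i ∈ S
        · simp only [hg, if_pos h]
          split <;> rcases hb with h' | h' <;> simp [h']
        · simp [hg, h]
      · intro i j hij hi hj hbet
        have hiS : i ∈ S := (hne S i).1 hi
        have hjS : j ∈ S := (hne S j).1 hj
        have hfeq : S.filter (· < j) = insert i (S.filter (· < i)) := by
          ext x
          simp only [Finset.mem_insert, Finset.mem_filter, decide_eq_true_eq]
          constructor
          · rintro ⟨hxS, hxj⟩
            rcases lt_trichotomy x i with h | h | h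
            · exact Or.inr ⟨hxS, h⟩
            · exact Or.inl h
            · exact absurd (hbet x h hxj) ((hne S x).2 hxS)
          · rintro (rfl | ⟨hxS, hxi⟩)
            · exact ⟨hiS, hij⟩
            · exact ⟨hxS, lt_trans hxi hij⟩
        have hinot : i ∉ S.filter (· < i) := by simp [Finset.mem_filter]
        have hcards : (S.filter (· < j)).card = (S.filter (· < i)).card + 1 := by
          rw [hfeq, Finset.card_insert_of_notMem hinot]
        simp only [hg, if_pos hiS, if_pos hjS, hcards]
        by_cases hE : Even ((S.filter (· < i)).card)
        · rw [if_pos hE, if_neg (by simp [Nat.even_add_one, hE])]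
        · rw [if_neg hE, if_pos (by simp [Nat.even_add_one, hE])]
          ring
      · intro i hi hfirst
        have hiS : i ∈ S := (hne S i).1 hi
        have hT0 : (S.filter (· < i)).card = 0 := by
          rw [Finset.card_eq_zero]
          apply Finset.eq_empty_of_forall_notMem
          intro x hx
          rw [Finset.mem_filter] at hx
          exact ((hne S x).2 hx.1) (hfirst x hx.2)
        simp [hg, hiS, hT0]
      · have : Finset.univ.filter (fun i => g S i ≠ 0) = S := by
          ext i; simp [hne S i]
        rw [this]
        exact hSodd
  rw [himg]
  have hinj : Set.InjOn g {S : Finset (Fin k) | Odd S.card} := by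
    intro S _ T _ h
    ext i
    rw [← hne S i, ← hne T i, h]
  rw [Set.ncard_image_of_injOn hinj]
  rw [Set.ncard_eq_toFinset_card']
  rw [← card_odd_subsets k hk]
  congr 1
  simp [Set.toFinset_setOf]
end

section
/- For every positive integer k and every sign b ∈ {−1, 1}, the number of sequences of length k over {−1, 0, 1} whose nonzero terms alternate in sign, whose first nonzero term (if any) equals b, and which have an even (possibly zero) number of nonzero terms is 2^(k−1). -/
/-!
A sequence whose nonzero terms alternate in sign and start with `b` is determined by its
support `S`: its value at `i ∈ S` is `(-1) ^ #{j ∈ S | j < i} * b`. Conversely this formula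
defines such a sequence for every finite set `S`, with `#S` nonzero terms. So the sequences are counted by
the subsets of a `k`-element set of even size, and there are `2 ^ (k - 1)` of these since
`∑ S, (-1) ^ #S = 0`.
-/

open Finset

theorem Finset.card_filter_even_card_powerset {α : Type*} {s : Finset α} (hs : s.Nonempty) :
    #{t ∈ s.powerset | Even #t} = 2 ^ (#s - 1) := by
  set e := #{t ∈ s.powerset | Even #t}
  set o := #{t ∈ s.powerset | ¬Even #t}
  have hdiff : (e : ℤ) - o = 0 := by
    rw [← sum_powerset_neg_one_pow_card_of_nonempty hs,
      ← sum_filter_add_sum_filter_not _ (fun t => Even #t)]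
    have hodd : ∀ t ∈ {t ∈ s.powerset | ¬Even #t}, (-1 : ℤ) ^ #t = -1 := fun t ht =>
      (Nat.not_even_iff_odd.mp (mem_filter.mp ht).2).neg_one_pow
    rw [sum_congr rfl fun t ht => (mem_filter.mp ht).2.neg_one_pow, sum_congr rfl hodd]
    simp [e, o, sub_eq_add_neg]
  have hsum : e + o = 2 ^ #s := by
    rw [card_filter_add_card_filter_not, card_powerset]
  have hpow : 2 ^ #s = 2 * 2 ^ (#s - 1) := by
    rw [← pow_succ', Nat.sub_add_cancel hs.card_pos]
  omega

theorem Finset.filter_lt_eq_insert_filter_lt {ι : Type*} [LinearOrder ι] {S : Finset ι}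
    {i j : ι} (hij : i < j) (hi : i ∈ S) (hgap : ∀ l ∈ S, i < l → ¬l < j) :
    {l ∈ S | l < j} = insert i {l ∈ S | l < i} := by
  ext l
  simp only [mem_filter, mem_insert]
  constructor
  · rintro ⟨hl, hlj⟩
    rcases lt_trichotomy l i with h | rfl | h
    · exact Or.inr ⟨hl, h⟩
    · exact Or.inl rfl
    · exact absurd hlj (hgap l hl h)
  · rintro (rfl | ⟨hl, hli⟩)
    · exact ⟨hi, hij⟩
    · exact ⟨hl, hli.trans hij⟩

section AlternatingSeq

variable {ι : Type*} [LinearOrder ι]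

def alternatingSeq (b : ℤ) (S : Finset ι) (i : ι) : ℤ :=
  if i ∈ S then (-1) ^ #{j ∈ S | j < i} * b else 0

variable {b : ℤ} {S : Finset ι}

theorem alternatingSeq_ne_zero_iff (hb : b ≠ 0) {i : ι} : alternatingSeq b S i ≠ 0 ↔ i ∈ S := by
  by_cases hi : i ∈ S <;> simp [alternatingSeq, hi, hb]

theorem alternatingSeq_injective (hb : b ≠ 0) :
    Function.Injective (alternatingSeq (ι := ι) b) := fun S T h => by
  ext i
  rw [← alternatingSeq_ne_zero_iff hb, ← alternatingSeq_ne_zero_iff hb, h]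

theorem alternatingSeq_of_gap {i j : ι} (hij : i < j) (hi : i ∈ S) (hj : j ∈ S)
    (hgap : ∀ l ∈ S, i < l → ¬l < j) :
    alternatingSeq b S j = -alternatingSeq b S i := by
  have hi' : i ∉ {l ∈ S | l < i} := by simp
  simp [alternatingSeq, hi, hj, filter_lt_eq_insert_filter_lt hij hi hgap, card_insert_of_notMem hi',
    pow_succ]

theorem alternatingSeq_of_forall_lt_notMem {i : ι} (hi : i ∈ S) (hfirst : ∀ l ∈ S, ¬l < i) :
    alternatingSeq b S i = b := by
  simp [alternatingSeq, hi, filter_eq_empty_iff.mpr hfirst]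

theorem alternatingSeq_mem_of_isUnit (hb : IsUnit b) (i : ι) :
    alternatingSeq b S i = -1 ∨ alternatingSeq b S i = 0 ∨ alternatingSeq b S i = 1 := by
  rcases Int.isUnit_iff.mp hb with rfl | rfl <;>
    rcases neg_one_pow_eq_or ℤ #{j ∈ S | j < i} with h | h <;>
    by_cases hi : i ∈ S <;> simp [alternatingSeq, hi, h]

variable [Fintype ι]

theorem filter_alternatingSeq_ne_zero (hb : b ≠ 0) :
    ({i | alternatingSeq b S i ≠ 0} : Finset ι) = S := by
  ext i
  simp [alternatingSeq_ne_zero_iff hb]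

theorem eq_alternatingSeq_support {v : ι → ℤ}
    (halt : ∀ i j, i < j → v i ≠ 0 → v j ≠ 0 → (∀ l, i < l → l < j → v l = 0) → v j = -v i)
    (hfirst : ∀ i, v i ≠ 0 → (∀ l, l < i → v l = 0) → v i = b) :
    v = alternatingSeq b {i | v i ≠ 0} := by
  set S : Finset ι := {i | v i ≠ 0}
  have mem_S : ∀ i, i ∈ S ↔ v i ≠ 0 := by simp [S]
  -- induction on the number of nonzero terms before position `i`
  suffices h : ∀ n, ∀ i ∈ S, #{l ∈ S | l < i} = n → v i = (-1) ^ n * b by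
    funext i
    by_cases hi : i ∈ S
    · simp [alternatingSeq, hi, h _ i hi rfl]
    · have hvi : v i = 0 := not_not.mp (mt (mem_S i).mpr hi)
      simp [alternatingSeq, hi, hvi]
  intro n
  induction n with
  | zero =>
    intro i hi hn
    rw [pow_zero, one_mul]
    refine hfirst i ((mem_S i).mp hi) fun l hl => ?_
    by_contra hvl
    exact filter_eq_empty_iff.mp (card_eq_zero.mp hn) ((mem_S l).mpr hvl) hl
  | succ n ih =>
    intro i hi hn
    have hne : ({l ∈ S | l < i} : Finset ι).Nonempty := card_pos.mp (by omega)
    set j := ({l ∈ S | l < i} : Finset ι).max' hne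
    obtain ⟨hj, hji⟩ := mem_filter.mp (max'_mem _ hne)
    have hgap : ∀ l ∈ S, j < l → ¬l < i := fun l hl hjl hli =>
      (le_max' _ l (mem_filter.mpr ⟨hl, hli⟩)).not_gt hjl
    have hj' : j ∉ {l ∈ S | l < j} := by simp
    have hcard : #{l ∈ S | l < j} = n := by
      rw [filter_lt_eq_insert_filter_lt hji hj hgap, card_insert_of_notMem hj'] at hn
      omega
    have hvi := halt j i hji ((mem_S j).mp hj) ((mem_S i).mp hi) fun l hjl hli => by
      by_contra hvl
      exact hgap l ((mem_S l).mpr hvl) hjl hli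
    rw [hvi, ih j hj hcard, pow_succ]
    ring

theorem setOf_alternating_eq_image (hb : IsUnit b) :
    {v : ι → ℤ |
      (∀ i, v i = -1 ∨ v i = 0 ∨ v i = 1) ∧
      (∀ i j, i < j → v i ≠ 0 → v j ≠ 0 → (∀ l, i < l → l < j → v l = 0) → v j = -v i) ∧
      (∀ i, v i ≠ 0 → (∀ l, l < i → v l = 0) → v i = b) ∧
      Even #{i | v i ≠ 0}} =
      alternatingSeq b '' {S | Even #S} := by
  have hb0 : b ≠ 0 := hb.ne_zero
  ext v
  constructor
  · rintro ⟨-, halt, hfirst, heven⟩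
    exact ⟨_, heven, (eq_alternatingSeq_support halt hfirst).symm⟩
  · rintro ⟨S, hS, rfl⟩
    refine ⟨alternatingSeq_mem_of_isUnit hb, ?_, ?_, ?_⟩
    · intro i j hij hi hj hgap
      rw [alternatingSeq_ne_zero_iff hb0] at hi hj
      exact alternatingSeq_of_gap hij hi hj fun l hl hil hlj =>
        (alternatingSeq_ne_zero_iff hb0).mpr hl (hgap l hil hlj)
    · intro i hi hprev
      exact alternatingSeq_of_forall_lt_notMem ((alternatingSeq_ne_zero_iff hb0).mp hi)
        fun l hl hli => (alternatingSeq_ne_zero_iff hb0).mpr hl (hprev l hli)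
    · rwa [filter_alternatingSeq_ne_zero hb0]

end AlternatingSeq

/-- For every positive integer `k` and sign `b ∈ {-1,1}`, the number of
sequences of length `k` over `{-1,0,1}` whose nonzero terms alternate in sign, whose
first nonzero term (if any) equals `b`, and which have an even (possibly zero) number
of nonzero terms is `2^(k-1)`. -/
theorem stmt1 (k : ℕ) (hk : 0 < k) (b : ℤ) (hb : b = -1 ∨ b = 1) :
    Set.ncard {v : Fin k → ℤ |
      (∀ i, v i = -1 ∨ v i = 0 ∨ v i = 1) ∧
      (∀ i j : Fin k, i < j → v i ≠ 0 → v j ≠ 0 →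
        (∀ l, i < l → l < j → v l = 0) → v j = -v i) ∧
      (∀ i : Fin k, v i ≠ 0 → (∀ l, l < i → v l = 0) → v i = b) ∧
      Even (Finset.univ.filter (fun i => v i ≠ 0)).card} = 2 ^ (k - 1) := by
  have hunit : IsUnit b := Int.isUnit_iff.mpr hb.symm
  have hne : (univ : Finset (Fin k)).Nonempty := univ_nonempty_iff.mpr ⟨⟨0, hk⟩⟩
  calc Set.ncard _ = Set.ncard (alternatingSeq b '' {S : Finset (Fin k) | Even #S}) :=
        congrArg Set.ncard (setOf_alternating_eq_image hunit)
    _ = Set.ncard {S : Finset (Fin k) | Even #S} :=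
        Set.ncard_image_of_injective _ (alternatingSeq_injective hunit.ne_zero)
    _ = #{S ∈ univ.powerset | Even #S} := by
        rw [← Set.ncard_coe_finset]
        congr 1
        ext S
        simp
    _ = 2 ^ (k - 1) := by
        rw [card_filter_even_card_powerset hne, card_univ, Fintype.card_fin]
end

section
/- The set of positive integers of the form 2^a · p^b, where p is an odd prime and a, b ≥ 0, has natural density zero. -/
/-!
Primes have density zero by Chebyshev's bound `π(x) ≪ x / log x`, and the prime powers `p ^ b`
with `b ≠ 1` up to `N` number only `O(√N)`. Multiplying a density-zero set by the powers of some
`q ≥ 2` preserves density zero: the numbers `q ^ a * m ≤ N` with `a < K` lie in `K` rescaled copies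
of the set, and those with `a ≥ K` are among the `N / q ^ K` multiples of `q ^ K`.
-/

open Filter Topology Finset
open scoped Classical

def HasDensityZero (P : ℕ → Prop) : Prop :=
  Tendsto (fun N : ℕ => (#{n ∈ Icc 1 N | P n} : ℝ) / N) atTop (𝓝 0)

theorem hasDensityZero_iff_eventually_le {P : ℕ → Prop} :
    HasDensityZero P ↔ ∀ ε > 0, ∀ᶠ N in atTop, (#{n ∈ Icc 1 N | P n} : ℝ) ≤ ε * N := by
  refine ⟨fun h ε hε => ?_, fun h => tendsto_order.2 ⟨fun a ha => ?_, fun ε hε => ?_⟩⟩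
  · filter_upwards [(tendsto_order.1 h).2 ε hε, eventually_gt_atTop 0] with N hlt hN
    exact ((div_lt_iff₀ (by positivity)).1 hlt).le
  · exact Eventually.of_forall fun N => ha.trans_le (by positivity)
  · filter_upwards [h (ε / 2) (half_pos hε)] with N hN
    exact (div_le_of_le_mul₀ N.cast_nonneg (by positivity) hN).trans_lt (half_lt_self hε)

theorem HasDensityZero.mono {P Q : ℕ → Prop} (hQ : HasDensityZero Q) (hPQ : ∀ n, P n → Q n) :
    HasDensityZero P := by
  refine squeeze_zero (fun N => by positivity) (fun N => ?_) hQ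
  gcongr
  exact hPQ _

theorem HasDensityZero.or {P Q : ℕ → Prop} (hP : HasDensityZero P) (hQ : HasDensityZero Q) :
    HasDensityZero fun n => P n ∨ Q n := by
  refine squeeze_zero (fun N => by positivity) (fun N => ?_) (by simpa using hP.add hQ)
  rw [← add_div]
  gcongr
  norm_cast
  refine (card_le_card fun n => ?_).trans (card_union_le _ _)
  simp only [mem_filter, mem_union]
  tauto

theorem hasDensityZero_of_card_le_mul_sqrt {P : ℕ → Prop} (C : ℝ)
    (h : ∀ N, (#{n ∈ Icc 1 N | P n} : ℝ) ≤ C * √N) : HasDensityZero P := by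
  have hlim : Tendsto (fun N : ℕ => C * (√N)⁻¹) atTop (𝓝 0) := by
    simpa using (tendsto_inv_atTop_zero.comp
      (Real.tendsto_sqrt_atTop.comp tendsto_natCast_atTop_atTop)).const_mul C
  refine squeeze_zero' (Eventually.of_forall fun N => by positivity) ?_ hlim
  filter_upwards [eventually_gt_atTop 0] with N hN
  calc (#{n ∈ Icc 1 N | P n} : ℝ) / N ≤ C * √N / N := by gcongr; exact h N
    _ = C * (√N)⁻¹ := by
      have : (0:ℝ) < √N := Real.sqrt_pos.2 (by exact_mod_cast hN)
      field_simp
      rw [Real.sq_sqrt N.cast_nonneg]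

open Real in
theorem hasDensityZero_prime : HasDensityZero Nat.Prime := by
  have hsqrt : Tendsto (fun N : ℕ => √(N : ℝ)) atTop atTop :=
    tendsto_sqrt_atTop.comp tendsto_natCast_atTop_atTop
  have hlim : Tendsto (fun N : ℕ => log 4 / log √N + (√N)⁻¹) atTop (𝓝 0) := by
    simpa using (tendsto_const_nhds.div_atTop (tendsto_log_atTop.comp hsqrt)).add
      (tendsto_inv_atTop_zero.comp hsqrt)
  refine squeeze_zero' (Eventually.of_forall fun N => by positivity) ?_ hlim
  filter_upwards [eventually_gt_atTop 1] with N hN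
  have hcard : #{n ∈ Icc 1 N | n.Prime} = N.primeCounting := by
    rw [← Nat.primesLE_card_eq_primeCounting, Nat.primesLE_eq_filter_Icc_one]
  have hN : (1 : ℝ) < N := by exact_mod_cast hN
  have hπ := Chebyshev.pi_le_log4_mul_div hN
  rw [Nat.floor_natCast] at hπ
  have hlog : 0 < log √(N : ℝ) := log_pos (by rw [lt_sqrt zero_le_one]; simpa using hN)
  rw [filter_congr_decidable, hcard, div_le_iff₀ (by positivity)]
  calc (N.primeCounting : ℝ) ≤ log 4 * N / log √N + √N := hπ
    _ = (log 4 / log √N + (√N)⁻¹) * N := by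
      field_simp
      linear_combination log √(N : ℝ) * mul_self_sqrt (N.cast_nonneg (α := ℝ))

theorem card_filter_prime_pow_ne_one_le (N : ℕ) :
    #{m ∈ Icc 1 N | ∃ p b, p.Prime ∧ b ≠ 1 ∧ m = p ^ b} ≤ 2 * N.sqrt := by
  -- `p ^ b = s ^ 2 * p ^ (b % 2)` with `s = p ^ (b / 2) ≤ √N`, and `p` is recovered from `s`
  -- as its least prime factor unless `b = 0`.
  calc _ ≤ #(image (fun se : ℕ × ℕ => se.1 ^ 2 * se.1.minFac ^ se.2)
        (Icc 1 N.sqrt ×ˢ range 2)) := card_le_card ?_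
    _ ≤ #(Icc 1 N.sqrt ×ˢ range 2) := card_image_le
    _ = 2 * N.sqrt := by simp [mul_comm]
  intro m hm
  simp only [mem_filter, mem_Icc] at hm
  obtain ⟨⟨-, hmN⟩, p, b, hp, hb, rfl⟩ := hm
  simp only [mem_image, mem_product, mem_Icc, mem_range, Prod.exists]
  refine ⟨p ^ (b / 2), b % 2, ⟨⟨Nat.one_le_pow _ _ hp.pos, ?_⟩, Nat.mod_lt _ two_pos⟩, ?_⟩
  · rw [Nat.le_sqrt, ← pow_add]
    exact (Nat.pow_le_pow_right hp.pos (by omega)).trans hmN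
  · rcases Nat.eq_zero_or_pos (b / 2) with hb2 | hb2
    · obtain rfl : b = 0 := by omega
      simp
    · rw [hp.pow_minFac hb2.ne', ← pow_mul, ← pow_add, Nat.div_add_mod' b 2]

theorem hasDensityZero_prime_pow : HasDensityZero fun m => ∃ p b, p.Prime ∧ m = p ^ b := by
  have hhigher : HasDensityZero fun m => ∃ p b, p.Prime ∧ b ≠ 1 ∧ m = p ^ b :=
    hasDensityZero_of_card_le_mul_sqrt 2 fun N =>
      calc _ ≤ ((2 * N.sqrt : ℕ) : ℝ) := by exact_mod_cast card_filter_prime_pow_ne_one_le N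
        _ ≤ 2 * √N := by push_cast; gcongr; exact Real.nat_sqrt_le_real_sqrt
  refine (hasDensityZero_prime.or hhigher).mono ?_
  rintro m ⟨p, b, hp, rfl⟩
  by_cases hb : b = 1
  · exact Or.inl (by simpa [hb] using hp)
  · exact Or.inr ⟨p, b, hp, hb, rfl⟩

theorem card_filter_pow_mul_le (P : ℕ → Prop) (q N K : ℕ) :
    #{n ∈ Icc 1 N | ∃ a m, P m ∧ n = q ^ a * m} ≤
      ∑ a ∈ range K, #{m ∈ Icc 1 (N / q ^ a) | P m} + N / q ^ K := by
  calc _ ≤ #((range K).biUnion (fun a => image (q ^ a * ·) {m ∈ Icc 1 (N / q ^ a) | P m}) ∪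
        {n ∈ Ioc 0 N | q ^ K ∣ n}) := card_le_card ?_
    _ ≤ _ := (card_union_le _ _).trans <| add_le_add
        (card_biUnion_le.trans (sum_le_sum fun a _ => card_image_le))
        (Nat.Ioc_filter_dvd_card_eq_div N _).le
  intro n hn
  simp only [mem_filter, mem_Icc] at hn
  obtain ⟨⟨hn1, hnN⟩, a, m, hm, rfl⟩ := hn
  obtain ⟨hqa, hm0⟩ : 0 < q ^ a ∧ 0 < m := CanonicallyOrderedAdd.mul_pos.1 hn1
  by_cases ha : a < K
  · refine mem_union_left _ (mem_biUnion.2 ⟨a, mem_range.2 ha, mem_image.2 ⟨m, ?_, rfl⟩⟩)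
    refine mem_filter.2 ⟨mem_Icc.2 ⟨hm0, ?_⟩, hm⟩
    rwa [Nat.le_div_iff_mul_le hqa, mul_comm]
  · exact mem_union_right _ (mem_filter.2 ⟨mem_Ioc.2 ⟨by omega, hnN⟩,
      (pow_dvd_pow q (not_lt.1 ha)).mul_right m⟩)

theorem HasDensityZero.pow_mul {P : ℕ → Prop} (hP : HasDensityZero P) {q : ℕ} (hq : 1 < q) :
    HasDensityZero fun n => ∃ a m, P m ∧ n = q ^ a * m := by
  rw [hasDensityZero_iff_eventually_le] at hP ⊢
  intro ε hε
  obtain ⟨K, hK⟩ := exists_nat_gt (2 / ε)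
  have hK0 : 0 < (K : ℝ) := (by positivity : 0 < 2 / ε).trans hK
  have hsmall : ∀ a, ∀ᶠ N in atTop,
      (#{m ∈ Icc 1 (N / q ^ a) | P m} : ℝ) ≤ ε / (2 * K) * N := fun a =>
    ((Nat.tendsto_div_const_atTop (by positivity)).eventually
      (hP (ε / (2 * K)) (by positivity))).mono fun N hN =>
        hN.trans (by gcongr; exact_mod_cast Nat.div_le_self N _)
  filter_upwards [(eventually_all_finset (range K)).2 fun a _ => hsmall a] with N hN
  have htail : ((N / q ^ K : ℕ) : ℝ) ≤ ε / 2 * N :=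
    calc ((N / q ^ K : ℕ) : ℝ) ≤ N / q ^ K := by
          exact_mod_cast Nat.cast_div_le (α := ℝ) (m := N) (n := q ^ K)
      _ ≤ N / K := by gcongr; exact_mod_cast (Nat.lt_pow_self hq).le
      _ ≤ ε / 2 * N := by
        rw [div_le_iff₀ hK0]
        nlinarith [(div_lt_iff₀ hε).1 hK, N.cast_nonneg (α := ℝ)]
  calc (#{n ∈ Icc 1 N | ∃ a m, P m ∧ n = q ^ a * m} : ℝ)
      ≤ ∑ a ∈ range K, (#{m ∈ Icc 1 (N / q ^ a) | P m} : ℝ) + ((N / q ^ K : ℕ) : ℝ) := by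
        exact_mod_cast card_filter_pow_mul_le P q N K
    _ ≤ ∑ a ∈ range K, ε / (2 * K) * N + ε / 2 * N := add_le_add (sum_le_sum hN) htail
    _ = ε * N := by
        rw [sum_const, card_range, nsmul_eq_mul]
        field_simp
        ring

/-- The set of positive integers of the form `2^a · p^b` with `p` an
odd prime and `a, b ≥ 0` has natural density zero. -/
theorem stmt9 :
    Tendsto (fun N : ℕ =>
      (((Finset.Icc 1 N).filter
          (fun n => ∃ a b p : ℕ, p.Prime ∧ p ≠ 2 ∧ n = 2 ^ a * p ^ b)).card : ℝ) / N)
    atTop (nhds 0) := by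
  show HasDensityZero _
  refine (hasDensityZero_prime_pow.pow_mul one_lt_two).mono ?_
  rintro n ⟨a, b, p, hp, -, rfl⟩
  exact ⟨a, p ^ b, ⟨p, b, hp, rfl⟩, rfl⟩
end

section
/- Let v = (v_1,…,v_n) be a sequence over {−1,0,1} that is both d_1-periodic and d_2-periodic, where d_1 | n, d_2 | n, d_1-periodic means v_k = −v_{k+d_1} for all admissible k (similarly for d_2), n/d_1 and n/d_2 are odd, and g = gcd(d_1, d_2), so that d_1/g and d_2/g are both odd. Then v is g-periodic: v_k = −v_{k+g} for all admissible k. -/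
private lemma chain_aux (n d : ℕ) (v : ℕ → ℤ)
    (hper : ∀ k, 1 ≤ k → k + d ≤ n → v k = -v (k + d)) :
    ∀ j k, 1 ≤ k → k + j * d ≤ n → v (k + j * d) = (-1 : ℤ) ^ j * v k := by
  intro j
  induction j with
  | zero => intro k hk h; simp
  | succ j ih =>
    intro k hk h
    have e : k + (j + 1) * d = (k + j * d) + d := by ring
    have h1 : k + j * d ≤ n := by omega
    have h2 := hper (k + j * d) (by omega) (by omega)
    have h3 := ih k hk h1
    have h2' : v (k + j * d + d) = - v (k + j * d) := by linarith
    rw [e, h2', h3]; ring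

private lemma step_aux (n d : ℕ) (v : ℕ → ℤ) (hd : d ∣ n) (hpos : 0 < d)
    (hper : ∀ k, 1 ≤ k → k + d ≤ n → v k = -v (k + d)) (ho : Odd (n / d)) :
    ∀ k, 1 ≤ k →
      (-1:ℤ) ^ (((k + d) - 1) / n) * v (((k + d) - 1) % n + 1)
        = - ((-1:ℤ) ^ ((k - 1) / n) * v ((k - 1) % n + 1)) := by
  intro k hk
  set m := n / d with hm
  have hmn : d * m = n := Nat.mul_div_cancel' hd
  have hm1 : 1 ≤ m := ho.pos
  have hn : 0 < n := by rw [← hmn]; positivity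
  have hdn : d ≤ n := Nat.le_of_dvd hn hd
  set q := (k - 1) / n with hq
  set r := (k - 1) % n with hr
  have hrn : r < n := Nat.mod_lt _ hn
  have hkqr : r + q * n = k - 1 := Nat.mod_add_div' (k - 1) n
  by_cases hc : r + d < n
  · have e : k + d - 1 = (r + d) + q * n := by omega
    have ediv : (k + d - 1) / n = q := by
      rw [e, Nat.add_mul_div_right _ _ hn, Nat.div_eq_of_lt hc, Nat.zero_add]
    have emod : (k + d - 1) % n = r + d := by
      rw [e, Nat.add_mul_mod_self_right, Nat.mod_eq_of_lt hc]
    rw [ediv, emod]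
    have h1 := hper (r + 1) (by omega) (by omega)
    have e2 : r + 1 + d = r + d + 1 := by omega
    rw [e2] at h1
    rw [show v (r + d + 1) = - v (r + 1) by linarith]
    ring
  · have eq1 : (q + 1) * n = q * n + n := by ring
    have e : k + d - 1 = (r + d - n) + (q + 1) * n := by omega
    have hlt : r + d - n < n := by omega
    have ediv : (k + d - 1) / n = q + 1 := by
      rw [e, Nat.add_mul_div_right _ _ hn, Nat.div_eq_of_lt hlt, Nat.zero_add]
    have emod : (k + d - 1) % n = r + d - n := by
      rw [e, Nat.add_mul_mod_self_right, Nat.mod_eq_of_lt hlt]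
    rw [ediv, emod]
    set s := r + d - n with hs
    obtain ⟨m', hm'⟩ : ∃ m', m = m' + 1 := ⟨m - 1, by omega⟩
    have hmd : d * (m' + 1) = n := by rw [← hm']; exact hmn
    have h6 : m' * d + d = n := by rw [← hmd]; ring
    have e3 : s + 1 + m' * d = r + 1 := by omega
    have hch := chain_aux n d v hper m' (s + 1) (by omega) (by rw [e3]; omega)
    rw [e3] at hch
    have hev : Even m' := by
      obtain ⟨c, hc'⟩ := ho
      exact ⟨c, by omega⟩
    rw [hev.neg_one_pow, one_mul] at hch
    rw [← hch]; ring

private lemma full_per (d : ℕ) (f : ℕ → ℤ)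
    (hstep : ∀ k, 1 ≤ k → f (k + d) = - f k) :
    ∀ j k, 1 ≤ k → f (k + j * d) = (-1 : ℤ) ^ j * f k := by
  intro j
  induction j with
  | zero => intro k hk; simp
  | succ j ih =>
    intro k hk
    have e : k + (j + 1) * d = (k + j * d) + d := by ring
    rw [e, hstep (k + j * d) (by omega), ih k hk]; ring

/-- If a `{-1,0,1}`-sequence is both `d₁`-periodic and `d₂`-periodic
(with sign change), `n/d₁` and `n/d₂` are odd, and `d₁/g`, `d₂/g` are odd where
`g = gcd(d₁,d₂)`, then the sequence is `g`-periodic. -/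
theorem stmt11 (n d1 d2 : ℕ) (v : ℕ → ℤ)
    (hv : ∀ k, v k = -1 ∨ v k = 0 ∨ v k = 1)
    (hd1 : d1 ∣ n) (hd2 : d2 ∣ n) (hpos1 : 0 < d1) (hpos2 : 0 < d2)
    (hper1 : ∀ k, 1 ≤ k → k + d1 ≤ n → v k = -v (k + d1))
    (hper2 : ∀ k, 1 ≤ k → k + d2 ≤ n → v k = -v (k + d2))
    (ho1 : Odd (n / d1)) (ho2 : Odd (n / d2))
    (g : ℕ) (hg : g = Nat.gcd d1 d2)
    (hq1 : Odd (d1 / g)) (hq2 : Odd (d2 / g)) :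
    ∀ k, 1 ≤ k → k + g ≤ n → v k = -v (k + g) := by
  intro k hk hkg
  set f : ℕ → ℤ := fun k => (-1:ℤ) ^ ((k - 1) / n) * v ((k - 1) % n + 1) with hf
  have hstep1 : ∀ k, 1 ≤ k → f (k + d1) = - f k := fun k hk =>
    step_aux n d1 v hd1 hpos1 hper1 ho1 k hk
  have hstep2 : ∀ k, 1 ≤ k → f (k + d2) = - f k := fun k hk =>
    step_aux n d2 v hd2 hpos2 hper2 ho2 k hk
  have hfull1 := full_per d1 f hstep1
  have hfull2 := full_per d2 f hstep2
  have hgd1 : g ∣ d1 := hg ▸ Nat.gcd_dvd_left d1 d2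
  have hgd2 : g ∣ d2 := hg ▸ Nat.gcd_dvd_right d1 d2
  have hgpos : 0 < g := hg ▸ Nat.gcd_pos_of_pos_left d2 hpos1
  set p1 := d1 / g with hp1
  set p2 := d2 / g with hp2
  have hd1e : g * p1 = d1 := Nat.mul_div_cancel' hgd1
  have hd2e : g * p2 = d2 := Nat.mul_div_cancel' hgd2
  set x := Nat.gcdA d1 d2 with hx
  set y := Nat.gcdB d1 d2 with hy
  have hbez : (g : ℤ) = d1 * x + d2 * y := by
    rw [hg]; exact Nat.gcd_eq_gcd_ab d1 d2
  set t : ℕ := x.natAbs + y.natAbs + 1 with ht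
  have hp1pos : 0 < p1 := Nat.div_pos (Nat.le_of_dvd hpos1 hgd1) hgpos
  have hp2pos : 0 < p2 := Nat.div_pos (Nat.le_of_dvd hpos2 hgd2) hgpos
  have hxt : (x.natAbs : ℤ) + 1 ≤ (t : ℤ) := by
    have : x.natAbs + 1 ≤ t := by omega
    exact_mod_cast this
  have hyt : (y.natAbs : ℤ) + 1 ≤ (t : ℤ) := by
    have : y.natAbs + 1 ≤ t := by omega
    exact_mod_cast this
  have htnn : (0 : ℤ) ≤ t := by positivity
  have hp1z : (1 : ℤ) ≤ p1 := by exact_mod_cast hp1pos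
  have hp2z : (1 : ℤ) ≤ p2 := by exact_mod_cast hp2pos
  have hanneg : 0 ≤ x + (t : ℤ) * p2 := by
    have h3 : (t:ℤ) ≤ t * p2 := le_mul_of_one_le_right htnn hp2z
    have h4 : -(x.natAbs:ℤ) ≤ x := by omega
    linarith
  have hbnneg : 0 ≤ -y + (t : ℤ) * p1 := by
    have h3 : (t:ℤ) ≤ t * p1 := le_mul_of_one_le_right htnn hp1z
    have h4 : y ≤ (y.natAbs:ℤ) := by omega
    linarith
  set a : ℕ := (x + (t : ℤ) * p2).toNat with ha
  set b : ℕ := (-y + (t : ℤ) * p1).toNat with hb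
  have haz : (a : ℤ) = x + (t : ℤ) * p2 := Int.toNat_of_nonneg hanneg
  have hbz : (b : ℤ) = -y + (t : ℤ) * p1 := Int.toNat_of_nonneg hbnneg
  have e1 : (d1 : ℤ) = (g : ℤ) * p1 := by exact_mod_cast hd1e.symm
  have e2 : (d2 : ℤ) = (g : ℤ) * p2 := by exact_mod_cast hd2e.symm
  have hkey : (a : ℤ) * d1 = g + (b : ℤ) * d2 := by
    rw [haz, hbz, hbez, e1, e2]; ring
  have hkeyn : a * d1 = g + b * d2 := by exact_mod_cast hkey
  -- parity: a + b is odd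
  have hgz : (0:ℤ) < g := by exact_mod_cast hgpos
  have hunit : (p1 : ℤ) * x + (p2 : ℤ) * y = 1 := by
    have h5 : (g:ℤ) * ((p1:ℤ) * x + (p2:ℤ) * y) = (g:ℤ) * 1 := by
      rw [mul_one]
      conv_rhs => rw [hbez, e1, e2]
      ring
    exact mul_left_cancel₀ (ne_of_gt hgz) h5
  obtain ⟨c1, hc1⟩ := hq1
  obtain ⟨c2, hc2⟩ := hq2
  have hp1c : (p1 : ℤ) = 2 * c1 + 1 := by exact_mod_cast hc1
  have hp2c : (p2 : ℤ) = 2 * c2 + 1 := by exact_mod_cast hc2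
  have hxy : x + y = 2 * (-((c1:ℤ) * x + (c2:ℤ) * y)) + 1 := by
    rw [hp1c, hp2c] at hunit; linarith
  have hab : Odd (a + b) := by
    rw [← Int.odd_coe_nat]
    push_cast
    rw [haz, hbz]
    refine ⟨-((c1:ℤ) * x + (c2:ℤ) * y) - y + (t:ℤ) * ((c2:ℤ) + c1 + 1), ?_⟩
    rw [hp1c, hp2c]
    linear_combination hxy
  -- combine
  have h1 := hfull1 a k hk
  have h2 := hfull2 b (k + g) (by omega)
  have e : k + a * d1 = (k + g) + b * d2 := by omega
  rw [e, h2] at h1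
  have hs1 : (-1:ℤ)^a * (-1:ℤ)^a = 1 := by
    rw [← pow_add]; exact Even.neg_one_pow ⟨a, rfl⟩
  have hs2 : (-1:ℤ)^a * (-1:ℤ)^b = -1 := by
    rw [← pow_add]; exact hab.neg_one_pow
  have hcomb : f k = - f (k + g) := by
    calc f k = ((-1:ℤ)^a * (-1:ℤ)^a) * f k := by rw [hs1, one_mul]
      _ = (-1:ℤ)^a * ((-1:ℤ)^a * f k) := by ring
      _ = (-1:ℤ)^a * ((-1:ℤ)^b * f (k+g)) := by rw [h1]
      _ = ((-1:ℤ)^a * (-1:ℤ)^b) * f (k+g) := by ring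
      _ = - f (k+g) := by rw [hs2]; ring
  have hagree : ∀ j, 1 ≤ j → j ≤ n → f j = v j := by
    intro j hj1 hjn
    simp only [hf]
    rw [Nat.div_eq_of_lt (by omega), Nat.mod_eq_of_lt (by omega)]
    rw [pow_zero, one_mul]
    congr 1; omega
  rw [← hagree k hk (by omega), ← hagree (k + g) (by omega) hkg]
  exact hcomb
end

section
/- Let u = (u_0,…,u_{n−1}) be a sequence over {−1,0,1} obtained as u_i = s_i + t_i, where (s_i) satisfies s_{i+2p} = −s_i for all admissible i and (t_i) satisfies t_{i+2q} = −t_i for all admissible i, with p, q distinct odd primes and n = 2pq. If s_i = 0 for all even i and t_i ≠ 0 for all even i, and there exist an odd index j and an integer k with j + 2qk ≤ n−2, 1 ≤ j−1, such that s_{j+2qk} ≠ (−1)^k s_j, then the nonzero entries of u cannot alternate in sign throughout. -/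
/-- Step (ii) in the proof of the `E₁(2pq)` formula: under the stated
periodicity and support conditions on `s` and `t`, the nonzero entries of
`u = s + t` cannot alternate in sign throughout. -/
theorem stmt14 (p q n : ℕ) (hp : p.Prime) (hq : q.Prime) (hp2 : p ≠ 2) (hq2 : q ≠ 2)
    (hpq : p ≠ q) (hn : n = 2 * p * q)
    (s t u : ℕ → ℤ)
    (hu : ∀ i < n, u i = s i + t i)
    (huval : ∀ i < n, u i = -1 ∨ u i = 0 ∨ u i = 1)
    (hs : ∀ i, i + 2 * p ≤ n - 1 → s (i + 2 * p) = -s i)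
    (ht : ∀ i, i + 2 * q ≤ n - 1 → t (i + 2 * q) = -t i)
    (hs0 : ∀ i < n, i % 2 = 0 → s i = 0)
    (ht0 : ∀ i < n, i % 2 = 0 → t i ≠ 0)
    (hex : ∃ j k : ℕ, j % 2 = 1 ∧ 2 ≤ j ∧ j + 2 * q * k ≤ n - 2 ∧
      s (j + 2 * q * k) ≠ (-1) ^ k * s j) :
    ¬ (∀ i j, i < j → j < n → u i ≠ 0 → u j ≠ 0 →
        (∀ l, i < l → l < j → u l = 0) → u j = -u i) := by
  intro alt
  obtain ⟨j, k, hjodd, hj2, hjk, hsne⟩ := hex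
  have hq3 : 3 ≤ q := by have := hq.two_le; omega
  -- iterated antiperiodicity of t
  have teven : ∀ i m, i + 2 * q * m ≤ n - 1 → t (i + 2 * q * m) = (-1) ^ m * t i := by
    intro i m
    induction m with
    | zero => simp
    | succ m ih =>
      intro h
      have hsum : 2 * q * m + 2 * q = 2 * q * (m + 1) := by ring
      have h1 : i + 2 * q * m ≤ n - 1 := by omega
      have h2 := ht (i + 2 * q * m) (by omega)
      have heq : i + 2 * q * (m + 1) = i + 2 * q * m + 2 * q := by ring
      rw [heq, h2, ih h1]
      ring
  have ueq : ∀ i < n, i % 2 = 0 → u i = t i := by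
    intro i hi he
    rw [hu i hi, hs0 i hi he]; ring
  have une : ∀ i, i < n → i % 2 = 0 → u i ≠ 0 := by
    intro i hi he
    rw [ueq i hi he]; exact ht0 i hi he
  have adj : ∀ i, i + 1 < n → u i ≠ 0 → u (i + 1) ≠ 0 → u (i + 1) = -u i := by
    intro i hi h1 h2
    exact alt i (i + 1) (by omega) hi h1 h2 (fun l hl1 hl2 => absurd hl2 (by omega))
  have skip : ∀ i, i + 2 < n → u i ≠ 0 → u (i + 1) = 0 → u (i + 2) ≠ 0 →
      u (i + 2) = -u i := by
    intro i hi h0 h1 h2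
    refine alt i (i + 2) (by omega) hi h0 h2 (fun l hl1 hl2 => ?_)
    have : l = i + 1 := by omega
    rw [this]; exact h1
  obtain ⟨e, rfl⟩ : ∃ e, j = e + 1 := ⟨j - 1, by omega⟩
  have heeven : e % 2 = 0 := by omega
  set m := 2 * q * k with hm
  have hm2 : m = 2 * (q * k) := by rw [hm]; ring
  have hbig : e + 2 + m ≤ n - 1 := by omega
  have hn2 : 2 ≤ n := by omega
  -- even index nonvanishing
  have uE0 : u e ≠ 0 := une e (by omega) heeven
  have uE2 : u (e + 2) ≠ 0 := une (e + 2) (by omega) (by omega)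
  have uEm : u (e + m) ≠ 0 := une (e + m) (by omega) (by omega)
  have uE2m : u (e + 2 + m) ≠ 0 := une (e + 2 + m) (by omega) (by omega)
  -- antiperiodicity of u on even indices
  have uA : u (e + m) = (-1) ^ k * u e := by
    rw [ueq (e + m) (by omega) (by omega), ueq e (by omega) heeven]
    exact teven e k (by omega)
  have uB : u (e + 2 + m) = (-1) ^ k * u (e + 2) := by
    rw [ueq (e + 2 + m) (by omega) (by omega), ueq (e + 2) (by omega) (by omega)]
    have : e + 2 + m = e + 2 + 2 * q * k := by omega
    rw [this]
    exact teven (e + 2) k (by omega)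
  have hk0 : ((-1 : ℤ)) ^ k ≠ 0 := pow_ne_zero _ (by norm_num)
  -- key claim
  have ujj : u (e + 1 + m) = (-1) ^ k * u (e + 1) := by
    have hre : e + m + 1 = e + 1 + m := by omega
    have hre2 : e + m + 2 = e + 2 + m := by omega
    by_cases h1 : u (e + 1) = 0 <;> by_cases h2 : u (e + 1 + m) = 0
    · rw [h1, h2]; ring
    · -- u (e+1) = 0, u (e+1+m) ≠ 0 : contradiction
      exfalso
      have sk : u (e + 2) = -u e := skip e (by omega) uE0 h1 uE2
      have a1 : u (e + m + 1) = -u (e + m) := by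
        refine adj (e + m) (by omega) uEm ?_
        rw [hre]; exact h2
      have a2 : u (e + m + 2) = -u (e + m + 1) := by
        refine adj (e + m + 1) (by omega) ?_ ?_
        · rw [hre]; exact h2
        · rw [hre2]; exact uE2m
      rw [hre2] at a2
      rw [uB, sk, uA] at *
      -- a2 : (-1)^k * -u e = - u (e+m+1), a1 : u (e+m+1) = -((-1)^k * u e)
      have : (-1 : ℤ) ^ k * u e = -((-1) ^ k * u e) := by
        rw [a1] at a2; linarith [a2]
      have h3 : (2 : ℤ) * ((-1) ^ k * u e) = 0 := by linarith
      have h4 : ((-1 : ℤ)) ^ k * u e = 0 := by linarith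
      exact uE0 ((mul_eq_zero.mp h4).resolve_left hk0)
    · -- u (e+1) ≠ 0, u (e+1+m) = 0 : contradiction
      exfalso
      have a1 : u (e + 1) = -u e := adj e (by omega) uE0 h1
      have a2 : u (e + 2) = -u (e + 1) := adj (e + 1) (by omega) h1 uE2
      have sk : u (e + m + 2) = -u (e + m) := by
        refine skip (e + m) (by omega) uEm ?_ ?_
        · rw [hre]; exact h2
        · rw [hre2]; exact uE2m
      rw [hre2] at sk
      rw [uB, uA, a2, a1] at sk
      -- sk : (-1)^k * -(-u e) = -((-1)^k * u e)
      have h4 : ((-1 : ℤ)) ^ k * u e = 0 := by linarith [sk]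
      exact uE0 ((mul_eq_zero.mp h4).resolve_left hk0)
    · -- both nonzero
      have a1 : u (e + 1) = -u e := adj e (by omega) uE0 h1
      have aE : u (e + m + 1) = -u (e + m) := by
        refine adj (e + m) (by omega) uEm ?_
        rw [hre]; exact h2
      rw [hre] at aE
      rw [aE, uA, a1]; ring
  -- transfer to s, contradicting hex
  apply hsne
  have hj'lt : e + 1 + 2 * q * k < n := by omega
  have hsj' : s (e + 1 + 2 * q * k) = u (e + 1 + 2 * q * k) - t (e + 1 + 2 * q * k) := by
    have := hu (e + 1 + 2 * q * k) hj'lt; linarith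
  have hsj : s (e + 1) = u (e + 1) - t (e + 1) := by
    have := hu (e + 1) (by omega); linarith
  have htj : t (e + 1 + 2 * q * k) = (-1) ^ k * t (e + 1) := teven (e + 1) k (by omega)
  have huu : u (e + 1 + 2 * q * k) = (-1) ^ k * u (e + 1) := by
    have : e + 1 + 2 * q * k = e + 1 + m := by omega
    rw [this]; exact ujj
  rw [hsj', hsj, htj, huu]
  ring
end

section
/- Let p and q be distinct odd primes and n = 2pq. If F(z) is a polynomial of degree less than n with coefficients in {−1,0,1} that is divisible by the cyclotomic polynomial Φ_{2n}(z), then there exist polynomials f_1(z) and f_2(z) with integer coefficients, deg f_1 < 2p and deg f_2 < 2q, such that F(z) = f_1(z)·Φ_q(−z^{2p}) + f_2(z)·Φ_p(−z^{2q}). -/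
/-!
Over `ℤ`, `Φ_q(-z^{2p}) = Φ_{4pq} Φ_{4q}` and `Φ_p(-z^{2q}) = Φ_{4pq} Φ_{4p}`. The polynomials
`Φ_{4p}` and `Φ_{4q}` are coprime over `ℤ`: modulo `z⁴ - 1`, the multiple
`(z^{4r} - 1)/(z⁴ - 1)` of `Φ_{4r}` is congruent to `r`, and `z⁴ - 1` lies in the ideal
`(z^{4p} - 1, z^{4q} - 1)`, so that ideal contains `p` and `q`, hence `1`. Thus every multiple of
`Φ_{4pq}` is a combination `f₁ Φ_q(-z^{2p}) + f₂ Φ_p(-z^{2q})`. Finally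
`(z^{2p} + 1) Φ_q(-z^{2p}) = z^{2pq} + 1 = (z^{2q} + 1) Φ_p(-z^{2q})`, so `f₁` may be reduced
modulo `z^{2p} + 1`, and then the degree bound on `F` forces `deg f₂ < 2q`.
-/

open Polynomial Finset

section

variable {R : Type*} [CommRing R]

theorem exists_mul_pow_sub_one_add_mul_pow_sub_one (x : R) (a b : ℕ) :
    ∃ u v : R, u * (x ^ a - 1) + v * (x ^ b - 1) = x ^ Nat.gcd a b - 1 := by
  induction a, b using Nat.gcd.induction with
  | H0 b => exact ⟨0, 1, by simp⟩
  | H1 a b _ ih =>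
    obtain ⟨u, v, huv⟩ := ih
    obtain ⟨w, hw⟩ := pow_one_sub_dvd_pow_mul_sub_one x a (b / a)
    have hx : x ^ (b % a) * x ^ (a * (b / a)) = x ^ b := by
      rw [← pow_add, Nat.mod_add_div]
    refine ⟨v - u * x ^ (b % a) * w, u, ?_⟩
    rw [Nat.gcd_rec]
    linear_combination huv + u * x ^ (b % a) * hw - u * hx

namespace Polynomial

theorem exists_natCast_eq_mul_cyclotomic_add_mul_X_pow_sub_one {m r : ℕ} (hm : 0 < m)
    (hr : 1 < r) : ∃ u w : R[X], (r : R[X]) = u * cyclotomic (m * r) R + w * (X ^ m - 1) := by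
  have hm_mem : m ∈ (m * r).properDivisors :=
    Nat.mem_properDivisors.mpr ⟨dvd_mul_right m r, lt_mul_right hm hr⟩
  obtain ⟨c, hc⟩ := X_pow_sub_one_mul_cyclotomic_dvd_X_pow_sub_one_of_dvd R hm_mem
  set S : R[X] := ∑ i ∈ range r, (X ^ m) ^ i
  -- `S = (X ^ (m * r) - 1) / (X ^ m - 1)` is a multiple of `Φ_{mr}` and `≡ r` mod `X ^ m - 1`.
  have hS : (X ^ m - 1) * S = (X ^ m - 1) * (cyclotomic (m * r) R * c) := by
    rw [mul_comm, geom_sum_mul, ← pow_mul, hc, mul_assoc]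
  obtain ⟨w, hw⟩ : X ^ m - 1 ∣ S - r := by
    rw [show S - r = ∑ i ∈ range r, ((X ^ m) ^ i - 1) by simp [S, sum_sub_distrib]]
    exact dvd_sum fun i _ => by simpa using sub_dvd_pow_sub_pow (X ^ m : R[X]) 1 i
  have hmonic : (X ^ m - 1 : R[X]).Monic := by simpa using monic_X_pow_sub_C (1 : R) hm.ne'
  exact ⟨c, -w, by linear_combination hmonic.isRegular.left hS - hw⟩

theorem isCoprime_cyclotomic_mul_prime_mul_prime {m p q : ℕ} (hm : 0 < m) (hp : p.Prime)
    (hq : q.Prime) (hpq : p ≠ q) : IsCoprime (cyclotomic (m * p) R) (cyclotomic (m * q) R) := by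
  have hcop : p.Coprime q := (Nat.coprime_primes hp hq).mpr hpq
  obtain ⟨a, b, hab⟩ := Nat.isCoprime_iff_coprime.mpr hcop
  have hab' : (a : R[X]) * p + b * q = 1 := by exact_mod_cast congrArg (Int.cast : ℤ → R[X]) hab
  obtain ⟨s, t, hst⟩ := exists_mul_pow_sub_one_add_mul_pow_sub_one (X : R[X]) (m * p) (m * q)
  rw [Nat.gcd_mul_left, hcop, mul_one] at hst
  obtain ⟨c₁, hc₁⟩ := cyclotomic.dvd_X_pow_sub_one (m * p) R
  obtain ⟨c₂, hc₂⟩ := cyclotomic.dvd_X_pow_sub_one (m * q) R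
  obtain ⟨u₁, w₁, hu₁⟩ :=
    exists_natCast_eq_mul_cyclotomic_add_mul_X_pow_sub_one (R := R) hm hp.one_lt
  obtain ⟨u₂, w₂, hu₂⟩ :=
    exists_natCast_eq_mul_cyclotomic_add_mul_X_pow_sub_one (R := R) hm hq.one_lt
  set w : R[X] := a * w₁ + b * w₂
  refine ⟨a * u₁ + w * s * c₁, b * u₂ + w * t * c₂, ?_⟩
  linear_combination hab' - a * hu₁ - b * hu₂ + w * (hst - s * hc₁ - t * hc₂)

theorem cyclotomic_comp_neg_mul_add_one {q : ℕ} (hq : q.Prime) (hq2 : q ≠ 2) (Y : R[X]) :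
    (cyclotomic q R).comp (-Y) * (Y + 1) = Y ^ q + 1 := by
  have := Fact.mk hq
  have h := congrArg (fun f => f.comp (-Y)) (cyclotomic_prime_mul_X_sub_one R q)
  simp only [mul_comp, sub_comp, pow_comp, X_comp, one_comp, (hq.odd_of_ne_two hq2).neg_pow] at h
  linear_combination -h

theorem cyclotomic_two_mul_mul_X_add_one {q : ℕ} (hq : q.Prime) (hq2 : q ≠ 2) :
    cyclotomic (2 * q) R * (X + 1) = X ^ q + 1 := by
  have := Fact.mk hq
  have hΦ := cyclotomic_prime_mul_X_sub_one R q
  have h2q : ¬2 ∣ q := fun h => hq2 ((Nat.prime_dvd_prime_iff_eq Nat.prime_two hq).mp h).symm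
  have h := congrArg (expand R 2) hΦ
  simp only [map_mul, map_sub, map_one, map_pow, expand_X,
    cyclotomic_expand_eq_cyclotomic_mul Nat.prime_two h2q, mul_comm q 2] at h
  have hmonic : (cyclotomic q R * (X - 1)).Monic := by
    simpa [hΦ] using monic_X_pow_sub_C (1 : R) hq.ne_zero
  exact hmonic.isRegular.left (by linear_combination h - (X ^ q + 1) * hΦ)

theorem cyclotomic_comp_neg_X {q : ℕ} (hq : q.Prime) (hq2 : q ≠ 2) :
    (cyclotomic q R).comp (-X) = cyclotomic (2 * q) R := by
  have hmonic : (X + 1 : R[X]).Monic := by simpa using monic_X_add_C (1 : R)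
  exact hmonic.isRegular.right ((cyclotomic_comp_neg_mul_add_one hq hq2 X).trans
    (cyclotomic_two_mul_mul_X_add_one hq hq2).symm)

theorem cyclotomic_comp_neg_X_pow_two_mul {p q : ℕ} (hp : p.Prime) (hq : q.Prime)
    (hp2 : p ≠ 2) (hq2 : q ≠ 2) (hpq : p ≠ q) :
    (cyclotomic q R).comp (-(X ^ (2 * p))) = cyclotomic (4 * p * q) R * cyclotomic (4 * q) R := by
  have hp_dvd : ¬p ∣ 2 * q := fun h => by
    rcases hp.dvd_mul.mp h with h | h
    · exact hp2 ((Nat.prime_dvd_prime_iff_eq hp Nat.prime_two).mp h)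
    · exact hpq ((Nat.prime_dvd_prime_iff_eq hp hq).mp h)
  rw [show -(X ^ (2 * p) : R[X]) = (-X).comp (X ^ (2 * p)) by simp, ← comp_assoc,
    cyclotomic_comp_neg_X hq hq2, ← expand_eq_comp_X_pow, ← expand_expand,
    cyclotomic_expand_eq_cyclotomic_mul hp hp_dvd, map_mul,
    cyclotomic_expand_eq_cyclotomic Nat.prime_two ⟨q * p, by ring⟩,
    cyclotomic_expand_eq_cyclotomic Nat.prime_two ⟨q, rfl⟩]
  ring_nf

theorem exists_natDegree_lt_of_mul_eq_mul [IsDomain R] {A B M N F g h : R[X]} (hM : M.Monic)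
    (hM0 : 0 < M.natDegree) (hN0 : 0 < N.natDegree) (hMN : M * A = N * B)
    (hF : F = g * A + h * B) (hdeg : F.natDegree < (N * B).natDegree) :
    ∃ f₁ f₂ : R[X], f₁.natDegree < M.natDegree ∧ f₂.natDegree < N.natDegree ∧
      F = f₁ * A + f₂ * B := by
  -- Reduce `g` modulo `M`; since `M * A = N * B`, the quotient moves into the coefficient of `B`.
  have hg := modByMonic_add_div g M
  set f₁ := g %ₘ M
  set f₂ := h + (g /ₘ M) * N
  have hF' : F = f₁ * A + f₂ * B := by linear_combination hF - A * hg + (g /ₘ M) * hMN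
  have hf₁ : f₁.natDegree < M.natDegree :=
    natDegree_modByMonic_lt g hM fun h1 => by simp [h1] at hM0
  refine ⟨f₁, f₂, hf₁, ?_, hF'⟩
  have hNB : N * B ≠ 0 := fun h0 => by simp [h0] at hdeg
  by_cases hf₂ : f₂ = 0
  · rwa [hf₂, natDegree_zero]
  have hlt : (f₂ * B).natDegree < (N * B).natDegree := by
    rw [show f₂ * B = F - f₁ * A by linear_combination -hF']
    refine (natDegree_sub_le _ _).trans_lt (max_lt hdeg ?_)
    calc (f₁ * A).natDegree ≤ f₁.natDegree + A.natDegree := natDegree_mul_le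
      _ < M.natDegree + A.natDegree := by omega
      _ = (N * B).natDegree := by
        rw [← hMN, hM.natDegree_mul' (right_ne_zero_of_mul (hMN ▸ hNB))]
  rw [natDegree_mul hf₂ (right_ne_zero_of_mul hNB), natDegree_mul (left_ne_zero_of_mul hNB)
    (right_ne_zero_of_mul hNB)] at hlt
  omega

end Polynomial

end

theorem stmt16_general (p q n : ℕ) (hp : p.Prime) (hq : q.Prime) (hp2 : p ≠ 2) (hq2 : q ≠ 2)
    (hpq : p ≠ q) (hn : n = 2 * p * q)
    (F : Polynomial ℤ) (hdeg : F.natDegree < n)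
    (hdvd : cyclotomic (2 * n) ℤ ∣ F) :
    ∃ f1 f2 : Polynomial ℤ, f1.natDegree < 2 * p ∧ f2.natDegree < 2 * q ∧
      F = f1 * (cyclotomic q ℤ).comp (-(X ^ (2 * p))) +
          f2 * (cyclotomic p ℤ).comp (-(X ^ (2 * q))) := by
  subst hn
  have h2p : 0 < 2 * p := Nat.mul_pos two_pos hp.pos
  have h2q : 0 < 2 * q := Nat.mul_pos two_pos hq.pos
  have hdeg_X (k : ℕ) : (X ^ k + 1 : ℤ[X]).natDegree = k := by
    simpa using natDegree_X_pow_add_C (R := ℤ) (n := k) (r := 1)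
  have hmonic : (X ^ (2 * p) + 1 : ℤ[X]).Monic := by simpa using monic_X_pow_add_C (1 : ℤ) h2p.ne'
  have hA : (X ^ (2 * p) + 1) * (cyclotomic q ℤ).comp (-(X ^ (2 * p))) = X ^ (2 * p * q) + 1 := by
    rw [mul_comm, cyclotomic_comp_neg_mul_add_one hq hq2, ← pow_mul]
  have hB : (X ^ (2 * q) + 1) * (cyclotomic p ℤ).comp (-(X ^ (2 * q))) = X ^ (2 * p * q) + 1 := by
    rw [mul_comm, cyclotomic_comp_neg_mul_add_one hp hp2, ← pow_mul, mul_right_comm]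
  obtain ⟨G, rfl⟩ := hdvd
  obtain ⟨u, v, huv⟩ := isCoprime_cyclotomic_mul_prime_mul_prime (R := ℤ) four_pos hq hp hpq.symm
  have hF : cyclotomic (2 * (2 * p * q)) ℤ * G =
      (G * u) * (cyclotomic q ℤ).comp (-(X ^ (2 * p))) +
        (G * v) * (cyclotomic p ℤ).comp (-(X ^ (2 * q))) := by
    rw [cyclotomic_comp_neg_X_pow_two_mul hp hq hp2 hq2 hpq,
      cyclotomic_comp_neg_X_pow_two_mul hq hp hq2 hp2 hpq.symm, mul_right_comm 4 q p,
      show 2 * (2 * p * q) = 4 * p * q by ring]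
    linear_combination (-cyclotomic (4 * p * q) ℤ * G) * huv
  simpa only [hdeg_X] using exists_natDegree_lt_of_mul_eq_mul hmonic (by rwa [hdeg_X])
    (by rwa [hdeg_X]) (hA.trans hB.symm) hF (by rwa [hB, hdeg_X])

/-- For `n = 2pq` with `p, q` distinct odd primes, every polynomial of
degree `< n` with coefficients in `{-1,0,1}` divisible by `Φ_{2n}` decomposes as
`f₁·Φ_q(-z^{2p}) + f₂·Φ_p(-z^{2q})` with `deg f₁ < 2p`, `deg f₂ < 2q`. -/
theorem stmt16 (p q n : ℕ) (hp : p.Prime) (hq : q.Prime) (hp2 : p ≠ 2) (hq2 : q ≠ 2)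
    (hpq : p ≠ q) (hn : n = 2 * p * q)
    (F : Polynomial ℤ) (hdeg : F.natDegree < n)
    (hcoeff : ∀ i, F.coeff i = -1 ∨ F.coeff i = 0 ∨ F.coeff i = 1)
    (hdvd : cyclotomic (2 * n) ℤ ∣ F) :
    ∃ f1 f2 : Polynomial ℤ, f1.natDegree < 2 * p ∧ f2.natDegree < 2 * q ∧
      F = f1 * (cyclotomic q ℤ).comp (-(X ^ (2 * p))) +
          f2 * (cyclotomic p ℤ).comp (-(X ^ (2 * q))) :=
  stmt16_general p q n hp hq hp2 hq2 hpq hn F hdeg hdvd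
end

section
/- Let p be the smallest odd prime divisor of a positive integer n that is not a power of 2, and suppose E_0(n) = (p·2^{n/p}/(4n))(1 + o(1)) and, for n = pqr with q the second smallest odd prime divisor and r = n/(pq) → ∞, E_1(n) ≥ (2^r(2^{p−1}−1)(2^{(q−1)(r−1)}−1) − 2^{(2pq+(r−2)q)/3})/(4pq). Then E_1(n)/E_0(n) > (r(2^{p−1}−1)/(p·2^{q−1}))(1 + o(1)) as r → ∞; in particular E_1(n) > E_0(n) once r > c·p·2^{q−p} for a suitable absolute constant c. -/
/-!
Since `2 ^ r * 2 ^ ((q - 1) * (r - 1)) = 2 ^ (q * r) / 2 ^ (q - 1)`, the lower bound for `E₁` is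
`2 ^ (q * r) * (2 ^ (p - 1) - 1) / (4 * p * q * 2 ^ (q - 1))` up to the relative errors
`2 ^ (-(q - 1) * (r - 1))` and `O(2 ^ (-2 * q * r / 3))`, while `E₀ ~ 2 ^ (q * r) / (4 * q * r)`.
Dividing gives `E₁ / E₀ ≥ T r * (1 + o(1))` with `T r = r * (2 ^ (p - 1) - 1) / (p * 2 ^ (q - 1))`;
an extra `1 / r` in the error term makes the inequality strict. As `T r → ∞`, eventually
`E₁ > E₀`.
-/

open Filter Topology

section Asymptotics

variable {R T g : ℕ → ℝ}

theorem exists_tendsto_zero_lt_mul_one_add (hg : Tendsto g atTop (𝓝 1))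
    (hT : ∀ᶠ r in atTop, 0 < T r) (hR : ∀ᶠ r in atTop, T r * g r ≤ R r) :
    ∃ e : ℕ → ℝ, Tendsto e atTop (𝓝 0) ∧ ∀ᶠ r in atTop, R r > T r * (1 + e r) := by
  refine ⟨fun r => g r - 1 - (r : ℝ)⁻¹, ?_, ?_⟩
  · simpa using (hg.sub_const 1).sub tendsto_inv_atTop_nhds_zero_nat
  · filter_upwards [hT, hR, eventually_gt_atTop 0] with r hTr hRr hr
    have : 0 < T r * (r : ℝ)⁻¹ := by positivity
    linarith [show T r * (1 + (g r - 1 - (r : ℝ)⁻¹)) = T r * g r - T r * (r : ℝ)⁻¹ by ring]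

theorem eventually_one_lt_of_tendsto_atTop (hg : Tendsto g atTop (𝓝 1))
    (hT : Tendsto T atTop atTop) (hR : ∀ᶠ r in atTop, T r * g r ≤ R r) :
    ∀ᶠ r in atTop, 1 < R r := by
  filter_upwards [(hT.atTop_mul_pos one_pos hg).eventually_gt_atTop 1, hR] with r h1 h2
  exact h1.trans_le h2

theorem exists_pos_forall_of_eventually_atTop {P : ℕ → Prop} (h : ∀ᶠ r in atTop, P r)
    {a : ℝ} (ha : 0 < a) : ∃ c : ℝ, 0 < c ∧ ∀ r : ℕ, c * a < r → P r := by
  obtain ⟨N, hN⟩ := eventually_atTop.1 h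
  refine ⟨(N + 1) / a, by positivity, fun r hr => hN r ?_⟩
  rw [div_mul_cancel₀ _ ha.ne'] at hr
  exact_mod_cast (show (N : ℝ) ≤ r by linarith)

end Asymptotics

section ReinhardtCounts

variable (p q r : ℕ)

noncomputable def periodicMainTerm : ℝ := (p : ℝ) * 2 ^ (q * r) / (4 * (p * q * r))

noncomputable def sporadicLowerBound : ℝ :=
  ((2 : ℝ) ^ r * (2 ^ (p - 1) - 1) * (2 ^ ((q - 1) * (r - 1)) - 1)
    - (2 : ℝ) ^ (((2 * p * q + (r - 2) * q : ℕ) : ℝ) / 3)) / (4 * (p * q))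

noncomputable def ratioMainTerm : ℝ := (r : ℝ) * (2 ^ (p - 1) - 1) / (p * 2 ^ (q - 1))

variable {p q r}

theorem one_le_two_pow_pred_sub_one (hp : 2 ≤ p) : (1 : ℝ) ≤ 2 ^ (p - 1) - 1 := by
  have : (2 : ℝ) ≤ 2 ^ (p - 1) := le_self_pow₀ one_le_two (by omega)
  linarith

theorem periodicMainTerm_pos (hp : 0 < p) (hq : 0 < q) (hr : 0 < r) :
    0 < periodicMainTerm p q r := by
  unfold periodicMainTerm; positivity

theorem tendsto_ratioMainTerm_atTop (hp : 2 ≤ p) :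
    Tendsto (ratioMainTerm p q) atTop atTop := by
  have hM := one_le_two_pow_pred_sub_one hp
  have hc : 0 < ((2 : ℝ) ^ (p - 1) - 1) / (p * 2 ^ (q - 1)) := by
    have : (0 : ℝ) < p := by exact_mod_cast (by omega : 0 < p)
    exact div_pos (by linarith) (by positivity)
  refine (tendsto_natCast_atTop_atTop.atTop_mul_const hc).congr fun r => ?_
  rw [ratioMainTerm, mul_div_assoc]

theorem sporadicLowerBound_div_eq (hp : 2 ≤ p) (hq : 1 ≤ q) (hr : 1 ≤ r) :
    sporadicLowerBound p q r / (ratioMainTerm p q r * periodicMainTerm p q r)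
      = 1 - ((2 : ℝ) ^ ((q - 1) * (r - 1)))⁻¹
        - (2 : ℝ) ^ (((2 * p * q + (r - 2) * q : ℕ) : ℝ) / 3)
          / ((2 ^ (p - 1) - 1) * 2 ^ (r + (q - 1) * (r - 1))) := by
  have hqr : q * r = r + (q - 1) * (r - 1) + (q - 1) := by
    obtain ⟨a, rfl⟩ : ∃ a, q = a + 1 := ⟨q - 1, by omega⟩
    obtain ⟨b, rfl⟩ : ∃ b, r = b + 1 := ⟨r - 1, by omega⟩
    simp only [Nat.add_sub_cancel]; ring
  have hM : (2 : ℝ) ^ (p - 1) - 1 ≠ 0 := by linarith [one_le_two_pow_pred_sub_one hp]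
  have hp0 : (p : ℝ) ≠ 0 := by exact_mod_cast (by omega : p ≠ 0)
  have hq0 : (q : ℝ) ≠ 0 := by exact_mod_cast (by omega : q ≠ 0)
  have hr0 : (r : ℝ) ≠ 0 := by exact_mod_cast (by omega : r ≠ 0)
  unfold sporadicLowerBound ratioMainTerm periodicMainTerm
  rw [hqr, pow_add, pow_add]
  field_simp

theorem tendsto_inv_two_pow_pred_mul_pred (hq : 2 ≤ q) :
    Tendsto (fun r : ℕ => ((2 : ℝ) ^ ((q - 1) * (r - 1)))⁻¹) atTop (𝓝 0) := by
  have hexp : Tendsto (fun r : ℕ => (q - 1) * (r - 1)) atTop atTop :=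
    (tendsto_sub_atTop_nat 1).const_mul_atTop' (by omega)
  exact tendsto_inv_atTop_zero.comp ((tendsto_pow_atTop_atTop_of_one_lt one_lt_two).comp hexp)

theorem tendsto_two_rpow_div_two_pow_nhds_zero (hp : 2 ≤ p) (hq : 2 ≤ q) :
    Tendsto (fun r : ℕ => (2 : ℝ) ^ (((2 * p * q + (r - 2) * q : ℕ) : ℝ) / 3)
      / ((2 ^ (p - 1) - 1) * 2 ^ (r + (q - 1) * (r - 1)))) atTop (𝓝 0) := by
  have hM := one_le_two_pow_pred_sub_one hp
  refine squeeze_zero' (Eventually.of_forall fun r => by positivity) ?_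
    (tendsto_inv_atTop_zero.comp (tendsto_pow_atTop_atTop_of_one_lt one_lt_two))
  filter_upwards [eventually_ge_atTop (2 * p * q + q)] with r hr
  have hnat : 2 * p * q + (r - 2) * q ≤ 3 * ((q - 1) * (r - 1)) := by
    obtain ⟨a, rfl⟩ : ∃ a, q = a + 2 := ⟨q - 2, by omega⟩
    obtain ⟨b, rfl⟩ : ∃ b, r = b + 2 := ⟨r - 2, by omega⟩
    simp only [Nat.add_sub_cancel, show a + 2 - 1 = a + 1 by omega, show b + 2 - 1 = b + 1 by omega]
    nlinarith
  have hexp : (((2 * p * q + (r - 2) * q : ℕ) : ℝ) / 3) ≤ (((q - 1) * (r - 1) : ℕ) : ℝ) := by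
    rw [div_le_iff₀ three_pos]
    exact_mod_cast hnat.trans_eq (mul_comm _ _)
  have hw : (2 : ℝ) ^ (((2 * p * q + (r - 2) * q : ℕ) : ℝ) / 3) ≤ 2 ^ ((q - 1) * (r - 1)) := by
    rw [← Real.rpow_natCast]
    exact Real.rpow_le_rpow_of_exponent_le one_le_two hexp
  calc _ ≤ (2 : ℝ) ^ ((q - 1) * (r - 1)) / (1 * 2 ^ (r + (q - 1) * (r - 1))) := by gcongr
    _ = ((2 : ℝ) ^ r)⁻¹ := by rw [one_mul, pow_add]; field_simp

theorem tendsto_sporadicLowerBound_div (hp : 2 ≤ p) (hq : 2 ≤ q) :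
    Tendsto (fun r => sporadicLowerBound p q r / (ratioMainTerm p q r * periodicMainTerm p q r))
      atTop (𝓝 1) := by
  have h := ((tendsto_inv_two_pow_pred_mul_pred hq).const_sub 1).sub
    (tendsto_two_rpow_div_two_pow_nhds_zero hp hq)
  rw [sub_zero, sub_zero] at h
  refine h.congr' ?_
  filter_upwards [eventually_ge_atTop 1] with r hr
  rw [sporadicLowerBound_div_eq hp (by omega) hr]

end ReinhardtCounts

theorem stmt19_general (p q : ℕ) (hp : p.Prime) (hq : q.Prime) (E0 E1 : ℕ → ℕ)
    (hE0 : ∃ e0 : ℕ → ℝ, Tendsto e0 atTop (nhds 0) ∧ ∀ r : ℕ, 2 ≤ r →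
      (E0 (p * q * r) : ℝ)
        = ((p : ℝ) * 2 ^ (q * r) / (4 * (p * q * r))) * (1 + e0 r))
    (hE1 : ∀ r : ℕ, 2 ≤ r →
      (E1 (p * q * r) : ℝ) ≥ ((2 : ℝ) ^ r * (2 ^ (p - 1) - 1) * (2 ^ ((q - 1) * (r - 1)) - 1)
        - (2 : ℝ) ^ (((2 * p * q + (r - 2) * q : ℕ) : ℝ) / 3)) / (4 * (p * q))) :
    (∃ e : ℕ → ℝ, Tendsto e atTop (nhds 0) ∧ ∀ᶠ r : ℕ in atTop,
      (E1 (p * q * r) : ℝ) / E0 (p * q * r)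
        > ((r : ℝ) * (2 ^ (p - 1) - 1) / (p * 2 ^ (q - 1))) * (1 + e r)) ∧
    (∃ cc : ℝ, 0 < cc ∧ ∀ r : ℕ, 2 ≤ r → (r : ℝ) > cc * p * 2 ^ (q - p) →
      E0 (p * q * r) < E1 (p * q * r)) := by
  obtain ⟨e0, he0, hE0⟩ := hE0
  have h1e0 : Tendsto (fun r => 1 + e0 r) atTop (𝓝 1) := by simpa using he0.const_add 1
  have hT := tendsto_ratioMainTerm_atTop (q := q) hp.two_le
  have hg := (tendsto_sporadicLowerBound_div hp.two_le hq.two_le).div h1e0 one_ne_zero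
  rw [div_one] at hg
  have hE0pos : ∀ᶠ r in atTop, (0 : ℝ) < E0 (p * q * r) := by
    filter_upwards [eventually_ge_atTop 2, h1e0.eventually (lt_mem_nhds one_pos)] with r hr h1
    rw [hE0 r hr]
    exact mul_pos (periodicMainTerm_pos hp.pos hq.pos (by omega)) h1
  have hR : ∀ᶠ r in atTop, ratioMainTerm p q r
      * (sporadicLowerBound p q r / (ratioMainTerm p q r * periodicMainTerm p q r) / (1 + e0 r))
      ≤ (E1 (p * q * r) : ℝ) / E0 (p * q * r) := by
    filter_upwards [eventually_ge_atTop 2, hE0pos, hT.eventually_gt_atTop 0] with r hr hpos hTr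
    have hm := periodicMainTerm_pos hp.pos hq.pos (by omega : 0 < r)
    rw [hE0 r hr] at hpos ⊢
    have h1 : 0 < 1 + e0 r := pos_of_mul_pos_right hpos hm.le
    calc _ = sporadicLowerBound p q r / (periodicMainTerm p q r * (1 + e0 r)) := by
          field_simp
      _ ≤ _ := div_le_div_of_nonneg_right (hE1 r hr) hpos.le
  refine ⟨exists_tendsto_zero_lt_mul_one_add hg (hT.eventually_gt_atTop 0) hR, ?_⟩
  have hlt : ∀ᶠ r in atTop, E0 (p * q * r) < E1 (p * q * r) := by
    filter_upwards [eventually_one_lt_of_tendsto_atTop hg hT hR, hE0pos] with r h1 hpos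
    exact_mod_cast (one_lt_div hpos).1 h1
  have hp0 : (0 : ℝ) < p := by exact_mod_cast hp.pos
  obtain ⟨c, hc, hcP⟩ := exists_pos_forall_of_eventually_atTop hlt
    (by positivity : (0 : ℝ) < p * 2 ^ (q - p))
  exact ⟨c, hc, fun r _ hr => hcP r (by rwa [mul_assoc] at hr)⟩

/-- Given the asymptotic formula for `E₀` and the lower bound for `E₁`,
the ratio `E₁/E₀` exceeds `(r(2^(p-1)-1)/(p·2^(q-1)))(1+o(1))` as `r → ∞`; in
particular `E₁(n) > E₀(n)` once `r > c·p·2^(q-p)` for a suitable constant `c`. -/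
theorem stmt19 (p q : ℕ) (hp : p.Prime) (hq : q.Prime) (hp2 : p ≠ 2) (hq2 : q ≠ 2)
    (hpq : p < q) (E0 E1 : ℕ → ℕ)
    (hE0 : ∃ e0 : ℕ → ℝ, Tendsto e0 atTop (nhds 0) ∧ ∀ r : ℕ, 2 ≤ r →
      (E0 (p * q * r) : ℝ)
        = ((p : ℝ) * 2 ^ (q * r) / (4 * (p * q * r))) * (1 + e0 r))
    (hE1 : ∀ r : ℕ, 2 ≤ r →
      (E1 (p * q * r) : ℝ) ≥ ((2 : ℝ) ^ r * (2 ^ (p - 1) - 1) * (2 ^ ((q - 1) * (r - 1)) - 1)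
        - (2 : ℝ) ^ (((2 * p * q + (r - 2) * q : ℕ) : ℝ) / 3)) / (4 * (p * q))) :
    (∃ e : ℕ → ℝ, Tendsto e atTop (nhds 0) ∧ ∀ᶠ r : ℕ in atTop,
      (E1 (p * q * r) : ℝ) / E0 (p * q * r)
        > ((r : ℝ) * (2 ^ (p - 1) - 1) / (p * 2 ^ (q - 1))) * (1 + e r)) ∧
    (∃ cc : ℝ, 0 < cc ∧ ∀ r : ℕ, 2 ≤ r → (r : ℝ) > cc * p * 2 ^ (q - p) →
      E0 (p * q * r) < E1 (p * q * r)) :=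
  stmt19_general p q hp hq E0 E1 hE0 hE1
end
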